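/- Pumping preserves k-spacedness and fairness: Given a fair pumpable path in a colored Büchi graph in which every block contains a repeated vertex, for every k ∈ ℕ, pumping each repetition k times yields a fair path whose induced coloring is k-spaced (every block has length at least k and there are infinitely many changepoints). -/

import Mathlib

namespace PLDLPaper

/-- Propositional formulas over atomic propositions `P`. -/
inductive PropF (P : Type) where
  | tru : PropF P
  | fls : PropF P
  | atom : P → PropF P
  | natom : P → PropF P
  | conj : PropF P → PropF P → PropF P
  | disj : PropF P → PropF P → PropF P

def PropF.eval {P : Type} (A : P → Prop) : PropF P → Prop
  | .tru => True
  | .fls => False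
  | .atom p => A p
  | .natom p => ¬ A p
  | .conj φ ψ => φ.eval A ∧ ψ.eval A
  | .disj φ ψ => φ.eval A ∨ ψ.eval A

mutual
/-- PLDL formulas (in negation normal form) over atomic propositions `P`
and variables `V`, extended with the fresh coloring proposition `p`
(`colp`/`colnp`) and the changepoint-bounded operators of LDL_cp. -/
inductive Frm (P V : Type) where
  | pos : P → Frm P V
  | neg : P → Frm P V
  | colp : Frm P V
  | colnp : Frm P V
  | and : Frm P V → Frm P V → Frm P V
  | or : Frm P V → Frm P V → Frm P V
  | dia : RE P V → Frm P V → Frm P V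
  | box : RE P V → Frm P V → Frm P V
  | diaLe : RE P V → V → Frm P V → Frm P V
  | boxLe : RE P V → V → Frm P V → Frm P V
  | diaCp : RE P V → Frm P V → Frm P V
  | boxCp : RE P V → Frm P V → Frm P V
/-- Regular expressions with tests. -/
inductive RE (P V : Type) where
  | prop : PropF P → RE P V
  | test : Frm P V → RE P V
  | plus : RE P V → RE P V → RE P V
  | comp : RE P V → RE P V → RE P V
  | star : RE P V → RE P V
end

/-- `n` is a changepoint of the color sequence `c`. -/
def Changepoint (c : ℕ → Prop) (n : ℕ) : Prop :=
  n = 0 ∨ ¬ (c (n - 1) ↔ c n)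

/-- The infix at positions `n, …, n + j - 1` contains at most one changepoint. -/
def AtMostOneCP (c : ℕ → Prop) (n j : ℕ) : Prop :=
  ∀ m₁ m₂, n ≤ m₁ → m₁ < n + j → n ≤ m₂ → m₂ < n + j →
    Changepoint c m₁ → Changepoint c m₂ → m₁ = m₂

mutual
/-- Satisfaction `(w, n, α) ⊨ φ`; the color of position `n` (truth value of the
fresh proposition `p`) is `c n`. -/
def Sat {P V : Type} (w : ℕ → P → Prop) (c : ℕ → Prop) (α : V → ℕ) :
    Frm P V → ℕ → Prop
  | .pos p, n => w n p
  | .neg p, n => ¬ w n p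
  | .colp, n => c n
  | .colnp, n => ¬ c n
  | .and φ ψ, n => Sat w c α φ n ∧ Sat w c α ψ n
  | .or φ ψ, n => Sat w c α φ n ∨ Sat w c α ψ n
  | .dia r ψ, n => ∃ j, Match w c α r n (n + j) ∧ Sat w c α ψ (n + j)
  | .box r ψ, n => ∀ j, Match w c α r n (n + j) → Sat w c α ψ (n + j)
  | .diaLe r z ψ, n => ∃ j, j ≤ α z ∧ Match w c α r n (n + j) ∧ Sat w c α ψ (n + j)
  | .boxLe r z ψ, n => ∀ j, j ≤ α z → Match w c α r n (n + j) → Sat w c α ψ (n + j)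
  | .diaCp r ψ, n => ∃ j, Match w c α r n (n + j) ∧ AtMostOneCP c n j ∧ Sat w c α ψ (n + j)
  | .boxCp r ψ, n => ∀ j, Match w c α r n (n + j) → AtMostOneCP c n j → Sat w c α ψ (n + j)
/-- The match relation `R(r, w, α)`. -/
def Match {P V : Type} (w : ℕ → P → Prop) (c : ℕ → Prop) (α : V → ℕ) :
    RE P V → ℕ → ℕ → Prop
  | .prop φ, m, n => n = m + 1 ∧ φ.eval (w m)
  | .test ψ, m, n => n = m ∧ Sat w c α ψ m
  | .plus r₀ r₁, m, n => Match w c α r₀ m n ∨ Match w c α r₁ m n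
  | .comp r₀ r₁, m, n => ∃ k, Match w c α r₀ m k ∧ Match w c α r₁ k n
  | .star r, m, n => ∃ (k : ℕ) (f : ℕ → ℕ), f 0 = m ∧ f k = n ∧
      ∀ i, i < k → Match w c α r (f i) (f (i + 1))
end

variable {P V : Type}

mutual
/-- Size of a formula. -/
def Frm.size : Frm P V → ℕ
  | .pos _ => 1
  | .neg _ => 1
  | .colp => 1
  | .colnp => 1
  | .and φ ψ => 1 + φ.size + ψ.size
  | .or φ ψ => 1 + φ.size + ψ.size
  | .dia r ψ => 1 + r.size + ψ.size
  | .box r ψ => 1 + r.size + ψ.size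
  | .diaLe r _ ψ => 1 + r.size + ψ.size
  | .boxLe r _ ψ => 1 + r.size + ψ.size
  | .diaCp r ψ => 1 + r.size + ψ.size
  | .boxCp r ψ => 1 + r.size + ψ.size
/-- Size (length) of a regular expression. -/
def RE.size : RE P V → ℕ
  | .prop _ => 1
  | .test ψ => 1 + ψ.size
  | .plus r₀ r₁ => 1 + r₀.size + r₁.size
  | .comp r₀ r₁ => 1 + r₀.size + r₁.size
  | .star r => 1 + r.size
end

mutual
/-- Variables parameterizing diamond operators. -/
def Frm.dvars [DecidableEq V] : Frm P V → Finset V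
  | .pos _ => ∅
  | .neg _ => ∅
  | .colp => ∅
  | .colnp => ∅
  | .and φ ψ => φ.dvars ∪ ψ.dvars
  | .or φ ψ => φ.dvars ∪ ψ.dvars
  | .dia r ψ => r.dvars ∪ ψ.dvars
  | .box r ψ => r.dvars ∪ ψ.dvars
  | .diaLe r z ψ => insert z (r.dvars ∪ ψ.dvars)
  | .boxLe r _ ψ => r.dvars ∪ ψ.dvars
  | .diaCp r ψ => r.dvars ∪ ψ.dvars
  | .boxCp r ψ => r.dvars ∪ ψ.dvars
def RE.dvars [DecidableEq V] : RE P V → Finset V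
  | .prop _ => ∅
  | .test ψ => ψ.dvars
  | .plus r₀ r₁ => r₀.dvars ∪ r₁.dvars
  | .comp r₀ r₁ => r₀.dvars ∪ r₁.dvars
  | .star r => r.dvars
end

mutual
/-- Variables parameterizing box operators. -/
def Frm.bvars [DecidableEq V] : Frm P V → Finset V
  | .pos _ => ∅
  | .neg _ => ∅
  | .colp => ∅
  | .colnp => ∅
  | .and φ ψ => φ.bvars ∪ ψ.bvars
  | .or φ ψ => φ.bvars ∪ ψ.bvars
  | .dia r ψ => r.bvars ∪ ψ.bvars
  | .box r ψ => r.bvars ∪ ψ.bvars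
  | .diaLe r _ ψ => r.bvars ∪ ψ.bvars
  | .boxLe r z ψ => insert z (r.bvars ∪ ψ.bvars)
  | .diaCp r ψ => r.bvars ∪ ψ.bvars
  | .boxCp r ψ => r.bvars ∪ ψ.bvars
def RE.bvars [DecidableEq V] : RE P V → Finset V
  | .prop _ => ∅
  | .test ψ => ψ.bvars
  | .plus r₀ r₁ => r₀.bvars ∪ r₁.bvars
  | .comp r₀ r₁ => r₀.bvars ∪ r₁.bvars
  | .star r => r.bvars
end

mutual
/-- The formula contains no changepoint-bounded operators. -/
def Frm.noCp : Frm P V → Prop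
  | .pos _ => True
  | .neg _ => True
  | .colp => True
  | .colnp => True
  | .and φ ψ => φ.noCp ∧ ψ.noCp
  | .or φ ψ => φ.noCp ∧ ψ.noCp
  | .dia r ψ => r.noCp ∧ ψ.noCp
  | .box r ψ => r.noCp ∧ ψ.noCp
  | .diaLe r _ ψ => r.noCp ∧ ψ.noCp
  | .boxLe r _ ψ => r.noCp ∧ ψ.noCp
  | .diaCp _ _ => False
  | .boxCp _ _ => False
def RE.noCp : RE P V → Prop
  | .prop _ => True
  | .test ψ => ψ.noCp
  | .plus r₀ r₁ => r₀.noCp ∧ r₁.noCp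
  | .comp r₀ r₁ => r₀.noCp ∧ r₁.noCp
  | .star r => r.noCp
end

mutual
/-- The formula does not mention the fresh coloring proposition `p`. -/
def Frm.noCol : Frm P V → Prop
  | .pos _ => True
  | .neg _ => True
  | .colp => False
  | .colnp => False
  | .and φ ψ => φ.noCol ∧ ψ.noCol
  | .or φ ψ => φ.noCol ∧ ψ.noCol
  | .dia r ψ => r.noCol ∧ ψ.noCol
  | .box r ψ => r.noCol ∧ ψ.noCol
  | .diaLe r _ ψ => r.noCol ∧ ψ.noCol
  | .boxLe r _ ψ => r.noCol ∧ ψ.noCol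
  | .diaCp r ψ => r.noCol ∧ ψ.noCol
  | .boxCp r ψ => r.noCol ∧ ψ.noCol
def RE.noCol : RE P V → Prop
  | .prop _ => True
  | .test ψ => ψ.noCol
  | .plus r₀ r₁ => r₀.noCol ∧ r₁.noCol
  | .comp r₀ r₁ => r₀.noCol ∧ r₁.noCol
  | .star r => r.noCol
end

/-- A genuine PLDL formula: no changepoint-bounded operators and no
occurrence of the fresh proposition `p`. -/
def IsPLDL (φ : Frm P V) : Prop := φ.noCp ∧ φ.noCol

/-- Well-formedness: no variable parameterizes both a diamond and a box. -/
def WellFormed [DecidableEq V] (φ : Frm P V) : Prop :=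
  ∀ z, z ∈ φ.dvars → z ∉ φ.bvars

/-- Dualization: the negation of a formula, pushing negations to atoms. -/
def Frm.not : Frm P V → Frm P V
  | .pos p => .neg p
  | .neg p => .pos p
  | .colp => .colnp
  | .colnp => .colp
  | .and φ ψ => .or φ.not ψ.not
  | .or φ ψ => .and φ.not ψ.not
  | .dia r ψ => .box r ψ.not
  | .box r ψ => .dia r ψ.not
  | .diaLe r z ψ => .boxLe r z ψ.not
  | .boxLe r z ψ => .diaLe r z ψ.not
  | .diaCp r ψ => .boxCp r ψ.not
  | .boxCp r ψ => .diaCp r ψ.not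

mutual
/-- `rel φ`: replace every parameterized operator by the corresponding
changepoint-bounded operator. -/
def Frm.rel : Frm P V → Frm P V
  | .pos p => .pos p
  | .neg p => .neg p
  | .colp => .colp
  | .colnp => .colnp
  | .and φ ψ => .and φ.rel ψ.rel
  | .or φ ψ => .or φ.rel ψ.rel
  | .dia r ψ => .dia r.rel ψ.rel
  | .box r ψ => .box r.rel ψ.rel
  | .diaLe r _ ψ => .diaCp r.rel ψ.rel
  | .boxLe r _ ψ => .boxCp r.rel ψ.rel
  | .diaCp r ψ => .diaCp r.rel ψ.rel
  | .boxCp r ψ => .boxCp r.rel ψ.rel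
def RE.rel : RE P V → RE P V
  | .prop φ => .prop φ
  | .test ψ => .test ψ.rel
  | .plus r₀ r₁ => .plus r₀.rel r₁.rel
  | .comp r₀ r₁ => .comp r₀.rel r₁.rel
  | .star r => .star r.rel
end

/-- `θ_∞p = [tt*]⟨tt*⟩p`: the fresh proposition `p` holds infinitely often. -/
def thetaInfP : Frm P V := .box (.star (.prop .tru)) (.dia (.star (.prop .tru)) .colp)

/-- `θ_∞¬p`. -/
def thetaInfNP : Frm P V := .box (.star (.prop .tru)) (.dia (.star (.prop .tru)) .colnp)

/-- `c(φ) = rel(φ) ∧ θ_∞p ∧ θ_∞¬p`. -/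
def cFrm (φ : Frm P V) : Frm P V := .and φ.rel (.and thetaInfP thetaInfNP)

/-- `[i, j)` is a block of the coloring `c`: `i` and `j` are consecutive
changepoints. -/
def IsBlock (c : ℕ → Prop) (i j : ℕ) : Prop :=
  i < j ∧ Changepoint c i ∧ Changepoint c j ∧
    ∀ m, i < m → m < j → ¬ Changepoint c m

/-- Infinitely many changepoints. -/
def InfCP (c : ℕ → Prop) : Prop := ∀ N, ∃ n, N < n ∧ Changepoint c n

/-- Every block has length at most `k` (and there are infinitely many
changepoints). -/
def kBounded (c : ℕ → Prop) (k : ℕ) : Prop :=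
  InfCP c ∧ ∀ i j, IsBlock c i j → j - i ≤ k

/-- Infinitely many changepoints and every block has length at least `k`. -/
def kSpaced (c : ℕ → Prop) (k : ℕ) : Prop :=
  InfCP c ∧ ∀ i j, IsBlock c i j → k ≤ j - i

/-!
Enumerate the changepoints of the coloring `n ↦ ℓ (ρ n)` as `I 0 = 0 < I 1 < ⋯`, so that the
blocks are the intervals `[I m, I (m + 1))`, and choose in each block a repetition
`ρ (a m) = ρ (b m)`. The pumped path runs through the blocks in order, traversing the loop
`[a m, b m)` of the `m`-th block `k` extra times. The copy of a block has the block's color and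
length at least `k`, and consecutive copies have different colors, so the changepoints of the
pumped coloring are exactly the starts of the copies. Every position of `ρ` is still visited,
no earlier than in `ρ`, which preserves fairness.
-/

theorem add_one_mod_eq_or {r d : ℕ} (hd : 0 < d) :
    (r + 1) % d = r % d + 1 ∨ ((r + 1) % d = 0 ∧ r % d + 1 = d) := by
  rw [← Nat.mod_add_mod]
  rcases Nat.lt_or_ge (r % d + 1) d with h | h
  · exact Or.inl (Nat.mod_eq_of_lt h)
  · have h : r % d + 1 = d := le_antisymm (Nat.mod_lt r hd) h
    exact Or.inr ⟨by rw [h, Nat.mod_self], h⟩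

section IntervalIndex

variable {s : ℕ → ℕ}

theorem exists_mem_Ico_of_strictMono (hs : StrictMono s) (hs0 : s 0 = 0) (n : ℕ) :
    ∃ m, s m ≤ n ∧ n < s (m + 1) := by
  induction n with
  | zero => exact ⟨0, hs0.le, by have := hs (lt_add_one 0); omega⟩
  | succ n ih =>
    obtain ⟨m, h₁, h₂⟩ := ih
    rcases Nat.lt_or_ge (n + 1) (s (m + 1)) with h | h
    · exact ⟨m, by omega, h⟩
    · exact ⟨m + 1, h, by have := hs (lt_add_one (m + 1)); omega⟩

open scoped Classical in
noncomputable def intervalIndex (s : ℕ → ℕ) (n : ℕ) : ℕ :=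
  Nat.findGreatest (fun m => s m ≤ n) n

theorem intervalIndex_eq (hs : StrictMono s) {m n : ℕ} (h₁ : s m ≤ n) (h₂ : n < s (m + 1)) :
    intervalIndex s n = m := by
  rw [intervalIndex, Nat.findGreatest_eq_iff]
  refine ⟨(hs.id_le m).trans h₁, fun _ => h₁, fun m' hm' _ h => ?_⟩
  have : s (m + 1) ≤ s m' := hs.monotone hm'
  omega

end IntervalIndex

section Coloring

variable {c : ℕ → Prop}

theorem changepoint_succ_iff {n : ℕ} : Changepoint c (n + 1) ↔ ¬ (c n ↔ c (n + 1)) := by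
  simp [Changepoint]

theorem IsBlock.iff_of_mem {i j x : ℕ} (hb : IsBlock c i j) (hx : x ∈ Set.Ico i j) :
    c x ↔ c i := by
  obtain ⟨hix, hxj⟩ := hx
  induction x, hix using Nat.le_induction with
  | base => rfl
  | succ x hix ih =>
    have hcp : ¬ Changepoint c (x + 1) := hb.2.2.2 (x + 1) (by omega) hxj
    rw [changepoint_succ_iff, not_not] at hcp
    exact hcp.symm.trans (ih (by omega))

theorem IsBlock.not_iff {i j : ℕ} (hb : IsBlock c i j) : ¬ (c j ↔ c i) := by
  obtain ⟨j, rfl⟩ : ∃ j', j = j' + 1 := Nat.exists_eq_succ_of_ne_zero (by have := hb.1; omega)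
  have hcp := hb.2.2.1
  rw [changepoint_succ_iff] at hcp
  exact fun h => hcp ((hb.iff_of_mem ⟨by have := hb.1; omega, lt_add_one j⟩).trans h.symm)

theorem InfCP.infinite (h : InfCP c) : (Set.ofPred (Changepoint c)).Infinite :=
  Set.infinite_of_forall_exists_gt fun N =>
    let ⟨n, hNn, hn⟩ := h N
    ⟨n, hn, hNn⟩

theorem InfCP.isBlock_nth (h : InfCP c) (m : ℕ) :
    IsBlock c (Nat.nth (Changepoint c) m) (Nat.nth (Changepoint c) (m + 1)) :=
  ⟨Nat.nth_strictMono h.infinite (lt_add_one m), Nat.nth_mem_of_infinite h.infinite m,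
    Nat.nth_mem_of_infinite h.infinite (m + 1),
    fun _ hm hm' hcp => (Nat.le_nth_of_lt_nth_succ hm' hcp).not_gt hm⟩

section Partition

variable {s : ℕ → ℕ} {col : ℕ → Prop}

theorem changepoint_iff_mem_range (hs : StrictMono s) (hs0 : s 0 = 0)
    (hconst : ∀ m n, s m ≤ n → n < s (m + 1) → (c n ↔ col m))
    (halt : ∀ m, ¬ (col (m + 1) ↔ col m)) {n : ℕ} :
    Changepoint c n ↔ n ∈ Set.range s := by
  constructor
  · intro hcp
    obtain ⟨m, h₁, h₂⟩ := exists_mem_Ico_of_strictMono hs hs0 n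
    rcases h₁.lt_or_eq with h₁ | h₁
    · obtain ⟨n, rfl⟩ : ∃ n', n = n' + 1 := Nat.exists_eq_succ_of_ne_zero (by omega)
      rw [changepoint_succ_iff] at hcp
      exact absurd ((hconst m n (by omega) (by omega)).trans (hconst m (n + 1) h₁.le h₂).symm) hcp
    · exact ⟨m, h₁⟩
  · rintro ⟨m, rfl⟩
    cases m with
    | zero => exact Or.inl hs0
    | succ m =>
      have hlt := hs (lt_add_one m)
      refine Or.inr fun h => halt m ?_
      rw [← hconst (m + 1) (s (m + 1)) le_rfl (hs (lt_add_one _)),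
        ← hconst m (s (m + 1) - 1) (by omega) (by omega)]
      exact h.symm

theorem kSpaced_of_partition {k : ℕ} (hs : StrictMono s) (hs0 : s 0 = 0)
    (hconst : ∀ m n, s m ≤ n → n < s (m + 1) → (c n ↔ col m))
    (halt : ∀ m, ¬ (col (m + 1) ↔ col m)) (hgap : ∀ m, k ≤ s (m + 1) - s m) :
    kSpaced c k := by
  have hcp {n : ℕ} := changepoint_iff_mem_range hs hs0 hconst halt (n := n)
  refine ⟨fun N => ⟨s (N + 1), (hs.id_le _).trans_lt' (lt_add_one N), hcp.2 ⟨_, rfl⟩⟩, ?_⟩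
  rintro i j ⟨hij, hi, hj, hbetween⟩
  obtain ⟨m, rfl⟩ := hcp.1 hi
  obtain ⟨m', rfl⟩ := hcp.1 hj
  obtain rfl : m' = m + 1 := by
    by_contra hne
    have hmm' := hs.lt_iff_lt.1 hij
    exact hbetween _ (hs (lt_add_one m)) (hs (by omega)) (hcp.2 ⟨_, rfl⟩)
  exact hgap m

end Partition

end Coloring

section PumpLoop

/-- `ρ ∘ pumpLoop a b k` is `ρ` with the loop `[a, b)` traversed `k` extra times. -/
def pumpLoop (a b k t : ℕ) : ℕ :=
  if t < a then t else if t < a + k * (b - a) then a + (t - a) % (b - a) else t - k * (b - a)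

variable {a b k t : ℕ}

theorem pumpLoop_of_le (h : t ≤ a) : pumpLoop a b k t = t := by
  unfold pumpLoop
  split_ifs with h₁ h₂
  · rfl
  · rw [show t - a = 0 by omega, Nat.zero_mod]
    omega
  · omega

theorem pumpLoop_of_mem_loop (h₁ : a ≤ t) (h₂ : t < a + k * (b - a)) :
    pumpLoop a b k t = a + (t - a) % (b - a) := by
  rw [pumpLoop, if_neg (by omega), if_pos h₂]

theorem pumpLoop_of_ge (h : a + k * (b - a) ≤ t) : pumpLoop a b k t = t - k * (b - a) := by
  rw [pumpLoop, if_neg (by omega), if_neg (by omega)]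

theorem pumpLoop_add_mul (h : a ≤ t) : pumpLoop a b k (t + k * (b - a)) = t := by
  rw [pumpLoop_of_ge (by omega), Nat.add_sub_cancel]

theorem exists_pumpLoop_eq (a b k x : ℕ) :
    ∃ t, x ≤ t ∧ t ≤ x + k * (b - a) ∧ pumpLoop a b k t = x := by
  rcases le_total x a with h | h
  · exact ⟨x, le_rfl, by omega, pumpLoop_of_le h⟩
  · exact ⟨x + k * (b - a), by omega, le_rfl, pumpLoop_add_mul h⟩

theorem pumpLoop_mem_Ico {i j : ℕ} (hia : i ≤ a) (hab : a < b) (hbj : b ≤ j) (hit : i ≤ t)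
    (htj : t < j + k * (b - a)) : pumpLoop a b k t ∈ Set.Ico i j := by
  rcases lt_or_ge t a with h | h
  · rw [pumpLoop_of_le h.le]
    exact ⟨hit, by omega⟩
  rcases lt_or_ge t (a + k * (b - a)) with h' | h'
  · rw [pumpLoop_of_mem_loop h h']
    have := Nat.mod_lt (t - a) (Nat.sub_pos_of_lt hab)
    exact ⟨by omega, by omega⟩
  · rw [pumpLoop_of_ge h']
    exact ⟨by omega, by omega⟩

theorem pumpLoop_succ_eq_or (hab : a < b) (t : ℕ) :
    pumpLoop a b k (t + 1) = pumpLoop a b k t + 1 ∨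
      (pumpLoop a b k (t + 1) = a ∧ pumpLoop a b k t + 1 = b) := by
  have hd : 0 < b - a := Nat.sub_pos_of_lt hab
  rcases lt_or_ge t a with h | h
  · rw [pumpLoop_of_le h.le, pumpLoop_of_le h]
    exact Or.inl rfl
  rcases lt_trichotomy (t + 1) (a + k * (b - a)) with h' | h' | h'
  · rw [pumpLoop_of_mem_loop (by omega) h', pumpLoop_of_mem_loop h (by omega),
      show t + 1 - a = t - a + 1 by omega]
    rcases add_one_mod_eq_or (r := t - a) hd with hmod | ⟨hmod, hwrap⟩
    · exact Or.inl (by omega)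
    · exact Or.inr ⟨by omega, by omega⟩
  · -- the `k`-th extra traversal of the loop ends: a jump from `b - 1` back to `a`
    have hmod : (t - a + 1) % (b - a) = 0 := by
      rw [show t - a + 1 = k * (b - a) by omega, Nat.mul_mod_left]
    rw [pumpLoop_of_ge h'.ge, pumpLoop_of_mem_loop h (by omega)]
    rcases add_one_mod_eq_or (r := t - a) hd with hmod' | ⟨_, hwrap⟩
    · omega
    · exact Or.inr ⟨by omega, by omega⟩
  · rw [pumpLoop_of_ge h'.le, pumpLoop_of_ge (by omega)]
    exact Or.inl (by omega)

theorem pumpLoop_succ {α : Type*} {ρ : ℕ → α} (hab : a < b) (hloop : ρ a = ρ b) (t : ℕ) :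
    ρ (pumpLoop a b k (t + 1)) = ρ (pumpLoop a b k t + 1) := by
  rcases pumpLoop_succ_eq_or hab t with h | ⟨h₁, h₂⟩
  · rw [h]
  · rw [h₁, h₂, hloop]

end PumpLoop

section PumpedPath

variable (I a b : ℕ → ℕ) (k : ℕ)

/-- Start of the copy of the block `[I m, I (m + 1))` in the path that traverses the loop
`[a m, b m)` of every block `k` extra times. -/
def pumpedStart (m : ℕ) : ℕ :=
  ∑ i ∈ Finset.range m, (I (i + 1) - I i + k * (b i - a i))

noncomputable def pumpedIndex (n : ℕ) : ℕ :=
  let m := intervalIndex (pumpedStart I a b k) n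
  pumpLoop (a m) (b m) k (I m + (n - pumpedStart I a b k m))

variable {I a b k}

@[simp]
theorem pumpedStart_zero : pumpedStart I a b k 0 = 0 := by
  simp [pumpedStart]

theorem pumpedStart_succ (m : ℕ) :
    pumpedStart I a b k (m + 1) = pumpedStart I a b k m + (I (m + 1) - I m + k * (b m - a m)) :=
  Finset.sum_range_succ _ m

theorem pumpedStart_strictMono (hI : StrictMono I) : StrictMono (pumpedStart I a b k) :=
  strictMono_nat_of_lt_succ fun m => by
    have := hI (lt_add_one m)
    rw [pumpedStart_succ]
    omega

theorem le_pumpedStart_succ_sub (hab : ∀ m, a m < b m) (m : ℕ) :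
    k ≤ pumpedStart I a b k (m + 1) - pumpedStart I a b k m := by
  have : k * 1 ≤ k * (b m - a m) := Nat.mul_le_mul_left k (by have := hab m; omega)
  rw [pumpedStart_succ]
  omega

theorem le_pumpedStart (hI : StrictMono I) (hI0 : I 0 = 0) (m : ℕ) :
    I m ≤ pumpedStart I a b k m := by
  induction m with
  | zero => simp [hI0]
  | succ m ih =>
    have := hI (lt_add_one m)
    rw [pumpedStart_succ]
    omega

theorem pumpedIndex_eq (hI : StrictMono I) {m n : ℕ} (h₁ : pumpedStart I a b k m ≤ n)
    (h₂ : n < pumpedStart I a b k (m + 1)) :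
    pumpedIndex I a b k n = pumpLoop (a m) (b m) k (I m + (n - pumpedStart I a b k m)) := by
  rw [pumpedIndex, intervalIndex_eq (pumpedStart_strictMono hI) h₁ h₂]

theorem pumpedIndex_mem_Ico (hI : StrictMono I) (hia : ∀ m, I m ≤ a m) (hab : ∀ m, a m < b m)
    (hbI : ∀ m, b m < I (m + 1)) {m n : ℕ} (h₁ : pumpedStart I a b k m ≤ n)
    (h₂ : n < pumpedStart I a b k (m + 1)) :
    pumpedIndex I a b k n ∈ Set.Ico (I m) (I (m + 1)) := by
  rw [pumpedIndex_eq hI h₁ h₂]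
  rw [pumpedStart_succ] at h₂
  exact pumpLoop_mem_Ico (hia m) (hab m) (hbI m).le (by omega)
    (by have := hI (lt_add_one m); omega)

theorem pumpedIndex_pumpedStart (hI : StrictMono I) (hia : ∀ m, I m ≤ a m) (m : ℕ) :
    pumpedIndex I a b k (pumpedStart I a b k m) = I m := by
  rw [pumpedIndex_eq hI le_rfl (pumpedStart_strictMono hI (lt_add_one m)), Nat.sub_self,
    add_zero, pumpLoop_of_le (hia m)]

theorem pumpedIndex_pumpedStart_succ_sub_one (hI : StrictMono I) (hab : ∀ m, a m < b m)
    (hbI : ∀ m, b m < I (m + 1)) (m : ℕ) :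
    pumpedIndex I a b k (pumpedStart I a b k (m + 1) - 1) = I (m + 1) - 1 := by
  have hlt := pumpedStart_strictMono (a := a) (b := b) (k := k) hI (lt_add_one m)
  have := hI (lt_add_one m)
  rw [pumpedIndex_eq hI (m := m) (by omega) (by omega), pumpedStart_succ,
    show I m + (pumpedStart I a b k m + (I (m + 1) - I m + k * (b m - a m)) - 1 -
      pumpedStart I a b k m) = I (m + 1) - 1 + k * (b m - a m) by omega,
    pumpLoop_add_mul (by have := hab m; have := hbI m; omega)]

theorem pumpedIndex_succ {α : Type*} {ρ : ℕ → α} (hI : StrictMono I) (hia : ∀ m, I m ≤ a m)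
    (hab : ∀ m, a m < b m) (hbI : ∀ m, b m < I (m + 1)) (hloop : ∀ m, ρ (a m) = ρ (b m))
    (n : ℕ) : ρ (pumpedIndex I a b k (n + 1)) = ρ (pumpedIndex I a b k n + 1) := by
  obtain ⟨m, h₁, h₂⟩ := exists_mem_Ico_of_strictMono (pumpedStart_strictMono hI) pumpedStart_zero n
  rcases Nat.lt_or_ge (n + 1) (pumpedStart I a b k (m + 1)) with h | h
  · rw [pumpedIndex_eq hI h₁ h₂, pumpedIndex_eq hI (by omega) h,
      show I m + (n + 1 - pumpedStart I a b k m) = I m + (n - pumpedStart I a b k m) + 1 by omega]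
    exact pumpLoop_succ (hab m) (hloop m) _
  · obtain rfl : n = pumpedStart I a b k (m + 1) - 1 := by omega
    have := hI (lt_add_one m)
    rw [Nat.sub_add_cancel (by omega), pumpedIndex_pumpedStart hI hia,
      pumpedIndex_pumpedStart_succ_sub_one hI hab hbI, Nat.sub_add_cancel (by omega)]

theorem pumpedIndex_zero (hI : StrictMono I) (hI0 : I 0 = 0) (hia : ∀ m, I m ≤ a m) :
    pumpedIndex I a b k 0 = 0 := by
  simpa [hI0] using pumpedIndex_pumpedStart (b := b) (k := k) hI hia 0

theorem exists_le_pumpedIndex_eq (hI : StrictMono I) (hI0 : I 0 = 0) (x : ℕ) :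
    ∃ n, x ≤ n ∧ pumpedIndex I a b k n = x := by
  obtain ⟨m, h₁, h₂⟩ := exists_mem_Ico_of_strictMono hI hI0 x
  obtain ⟨t, hxt, htx, ht⟩ := exists_pumpLoop_eq (a m) (b m) k x
  have hs := pumpedStart_succ (I := I) (a := a) (b := b) (k := k) m
  have := le_pumpedStart (a := a) (b := b) (k := k) hI hI0 m
  refine ⟨pumpedStart I a b k m + (t - I m), by omega, ?_⟩
  rw [pumpedIndex_eq hI (m := m) (by omega) (by omega),
    show I m + (pumpedStart I a b k m + (t - I m) - pumpedStart I a b k m) = t by omega, ht]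

end PumpedPath

/-- pumping preserves spacedness and fairness. Given a fair
pumpable path (with infinitely many changepoints) in a colored Büchi graph,
for every `k` there is a fair path (obtained by pumping each repetition) whose
induced coloring is `k`-spaced. -/
theorem pumping_spaced {Vt : Type} (E : Vt → Vt → Prop) (ℓ : Vt → Prop)
    (F : Vt → Prop) (ρ : ℕ → Vt)
    (hpath : ∀ n, E (ρ n) (ρ (n + 1)))
    (hfair : ∀ N, ∃ n, N < n ∧ F (ρ n))
    (hcp : InfCP (fun n => ℓ (ρ n)))
    (hpump : ∀ i j, IsBlock (fun n => ℓ (ρ n)) i j →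
      ∃ a b, i ≤ a ∧ a < b ∧ b < j ∧ ρ a = ρ b) :
    ∀ k : ℕ, ∃ ρ' : ℕ → Vt, ρ' 0 = ρ 0 ∧
      (∀ n, E (ρ' n) (ρ' (n + 1))) ∧
      (∀ N, ∃ n, N < n ∧ F (ρ' n)) ∧
      kSpaced (fun n => ℓ (ρ' n)) k := by
  intro k
  set I := Nat.nth (Changepoint fun n => ℓ (ρ n))
  have hI : StrictMono I := Nat.nth_strictMono hcp.infinite
  have hI0 : I 0 = 0 := Nat.nth_zero_of_zero (Or.inl rfl)
  have hblock : ∀ m, IsBlock (fun n => ℓ (ρ n)) (I m) (I (m + 1)) := hcp.isBlock_nth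
  choose a b hia hab hbI hloop using fun m => hpump _ _ (hblock m)
  refine ⟨fun n => ρ (pumpedIndex I a b k n), congrArg ρ (pumpedIndex_zero hI hI0 hia),
    fun n => ?_, fun N => ?_, ?_⟩
  · beta_reduce
    rw [pumpedIndex_succ hI hia hab hbI hloop]
    exact hpath _
  · obtain ⟨x, hNx, hx⟩ := hfair N
    obtain ⟨n, hxn, rfl⟩ := exists_le_pumpedIndex_eq (a := a) (b := b) (k := k) hI hI0 x
    exact ⟨n, hNx.trans_le hxn, hx⟩
  · exact kSpaced_of_partition (pumpedStart_strictMono hI) pumpedStart_zero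
      (fun m n h₁ h₂ => (hblock m).iff_of_mem (pumpedIndex_mem_Ico hI hia hab hbI h₁ h₂))
      (fun m => (hblock m).not_iff) (le_pumpedStart_succ_sub hab)

end PLDLPaper
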